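/- arXiv:2601.20490 — 2 statements merged into one kernel-verified Lean document; each statement's English description precedes it below -/
import Mathlib

section
/- Let G be a simple graph on a finite vertex type V, let P be a permutation of V, and let u and v be (possibly empty) concatenations of permutations of V. If the word u ++ P ++ P ++ v is a permutational 1-11-representation of G, then the word u ++ P ++ v obtained by deleting one copy of P is also a permutational 1-11-representation of G. -/
/-- The restriction `w_{x,y}` of a word `w`: the sublist of all letters equal to `x` or `y`. -/
def restrict {V : Type*} [DecidableEq V] (w : List V) (x y : V) : List V :=
  w.filter (fun z => decide (z = x ∨ z = y))

/-- The number of occurrences of the factor `xx` in a word `u`: the number of indices `i`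
with `i + 1 < u.length` and `u[i] = u[i+1] = x`. -/
def factorXXCount {V : Type*} [DecidableEq V] (u : List V) (x : V) : ℕ :=
  ((Finset.range u.length).filter (fun i => u[i]? = some x ∧ u[i + 1]? = some x)).card

/-- `w` is a 1-11-representation of `G`: every vertex occurs in `w`, and two distinct
vertices are adjacent iff the total number of occurrences of the factors `xx` and `yy`
in the restriction `w_{x,y}` is at most 1. -/
def Is111Rep {V : Type*} [DecidableEq V] (G : SimpleGraph V) (w : List V) : Prop :=
  (∀ v : V, v ∈ w) ∧
    ∀ x y : V, x ≠ y →
      (G.Adj x y ↔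
        factorXXCount (restrict w x y) x + factorXXCount (restrict w x y) y ≤ 1)

/-- A permutation of `V`, as a list: every element of `V` occurs exactly once. -/
def IsPermList {V : Type*} [DecidableEq V] (P : List V) : Prop :=
  ∀ v : V, P.count v = 1

/-- `w` is a concatenation of `k ≥ 1` permutations of `V`. -/
def IsPermConcat {V : Type*} [DecidableEq V] (w : List V) : Prop :=
  ∃ Ps : List (List V), Ps ≠ [] ∧ (∀ P ∈ Ps, IsPermList P) ∧ w = Ps.flatten

/-- `w` is a permutational 1-11-representation of `G`. -/
def IsPerm111Rep {V : Type*} [DecidableEq V] (G : SimpleGraph V) (w : List V) : Prop :=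
  Is111Rep G w ∧ IsPermConcat w

/-- `w` contains a cube `XXX` with `X` nonempty. -/
def ContainsCube {V : Type*} (w : List V) : Prop :=
  ∃ s1 X s2 : List V, X ≠ [] ∧ w = s1 ++ X ++ X ++ X ++ s2

/-- `w` contains a square `XX` with `X` nonempty. -/
def ContainsSquare {V : Type*} (w : List V) : Prop :=
  ∃ s1 X s2 : List V, X ≠ [] ∧ w = s1 ++ X ++ X ++ s2

/-- `G₀`: the disjoint union of a triangle on `{0,1,2}` and the isolated vertex `3`,
as a simple graph on `Fin 4`. -/
def G₀ : SimpleGraph (Fin 4) :=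
  SimpleGraph.fromRel (fun a b => a ≠ 3 ∧ b ≠ 3)

def fc {V : Type*} [DecidableEq V] : List V → V → ℕ
  | [], _ => 0
  | h :: t, x => (if h = x ∧ t.head? = some x then 1 else 0) + fc t x

lemma factorXXCount_eq_fc {V : Type*} [DecidableEq V] (u : List V) (x : V) :
    factorXXCount u x = fc u x := by
  induction u with
  | nil => simp [factorXXCount, fc]
  | cons h t ih =>
    rw [fc, ← ih]
    unfold factorXXCount
    rw [Finset.card_filter, Finset.card_filter]
    simp only [List.length_cons]
    rw [Finset.sum_range_succ']
    simp only [List.getElem?_cons_succ, List.getElem?_cons_zero, Finset.card_filter]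
    rw [add_comm]
    congr 1
    simp [List.head?_eq_getElem?]

lemma fc_dedup {V : Type*} [DecidableEq V] {a b : V} (hab : a ≠ b) (C : List V) (x : V)
    (A : List V) : fc (A ++ a :: b :: a :: b :: C) x = fc (A ++ a :: b :: C) x := by
  have h1 : ¬(a = x ∧ b = x) := fun ⟨p, q⟩ => hab (p.trans q.symm)
  have h2 : ¬(b = x ∧ a = x) := fun ⟨p, q⟩ => hab (q.trans p.symm)
  induction A with
  | nil => simp [fc, h1, h2]
  | cons h t ih =>
    have hh : (t ++ a :: b :: a :: b :: C).head? = (t ++ a :: b :: C).head? := by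
      cases t <;> simp
    simp only [List.cons_append, fc, List.append_eq, ih, hh]

lemma restrict_append {V : Type*} [DecidableEq V] (s t : List V) (x y : V) :
    restrict (s ++ t) x y = restrict s x y ++ restrict t x y :=
  List.filter_append ..

lemma count_two {V : Type*} [DecidableEq V] (x y : V) (hxy : x ≠ y) :
    ∀ L : List V, (∀ z ∈ L, z = x ∨ z = y) → L.count x + L.count y = L.length := by
  intro L hmem
  induction L with
  | nil => simp
  | cons c t ih =>
    have ht := ih (fun z hz => hmem z (List.mem_cons_of_mem _ hz))
    rcases hmem c List.mem_cons_self with rfl | rfl <;>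
      simp [List.count_cons, hxy, Ne.symm hxy] <;> omega

lemma two_elem {V : Type*} [DecidableEq V] {L : List V} {x y : V} (hxy : x ≠ y)
    (hx : L.count x = 1) (hy : L.count y = 1) (hmem : ∀ z ∈ L, z = x ∨ z = y) :
    L = [x, y] ∨ L = [y, x] := by
  have hlen : L.length = 2 := by
    have := count_two x y hxy L hmem
    omega
  match L, hlen with
  | [c, d], _ =>
    rcases hmem c (by simp) with rfl | rfl <;> rcases hmem d (by simp) with rfl | rfl
    · simp [List.count_cons] at hx
    · left; rfl
    · right; rfl
    · simp [List.count_cons] at hy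

lemma count_restrict_x {V : Type*} [DecidableEq V] (w : List V) (x y : V) :
    (restrict w x y).count x = w.count x := by
  unfold restrict
  rw [List.count_filter]
  simp

lemma count_restrict_y {V : Type*} [DecidableEq V] (w : List V) (x y : V) :
    (restrict w x y).count y = w.count y := by
  unfold restrict
  rw [List.count_filter]
  simp

lemma restrict_perm {V : Type*} [DecidableEq V] {P : List V} (hP : IsPermList P)
    {x y : V} (hxy : x ≠ y) : restrict P x y = [x, y] ∨ restrict P x y = [y, x] := by
  apply two_elem hxy
  · rw [count_restrict_x]; exact hP x
  · rw [count_restrict_y]; exact hP y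
  · intro z hz
    have := List.of_mem_filter hz
    simpa using this

/-- If `u ++ P ++ P ++ v` is a permutational 1-11-representation of `G`, where `P` is a
permutation of `V` and `u`, `v` are (possibly empty) concatenations of permutations of `V`,
then `u ++ P ++ v` is also a permutational 1-11-representation of `G`. -/
theorem stmt4 {V : Type*} [Fintype V] [DecidableEq V] (G : SimpleGraph V)
    (P u v : List V) (hP : IsPermList P)
    (hu : ∃ Ps : List (List V), (∀ Q ∈ Ps, IsPermList Q) ∧ u = Ps.flatten)
    (hv : ∃ Ps : List (List V), (∀ Q ∈ Ps, IsPermList Q) ∧ v = Ps.flatten)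
    (hrep : IsPerm111Rep G (u ++ P ++ P ++ v)) :
    IsPerm111Rep G (u ++ P ++ v) := by
  obtain ⟨⟨hmem, hadj⟩, _⟩ := hrep
  have hzP : ∀ z : V, z ∈ P := by
    intro z
    have h1 : P.count z ≠ 0 := by rw [hP z]; norm_num
    exact List.count_pos_iff.mp (Nat.pos_of_ne_zero h1)
  constructor
  · constructor
    · intro z
      simp [hzP z]
    · intro x y hxy
      rw [hadj x y hxy]
      have key : ∀ z, factorXXCount (restrict (u ++ P ++ P ++ v) x y) z
          = factorXXCount (restrict (u ++ P ++ v) x y) z := by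
        intro z
        rw [factorXXCount_eq_fc, factorXXCount_eq_fc]
        rcases restrict_perm hP hxy with hQ | hQ
        · simp only [restrict_append, hQ]
          simpa using fc_dedup hxy (restrict v x y) z (restrict u x y)
        · simp only [restrict_append, hQ]
          simpa using fc_dedup (Ne.symm hxy) (restrict v x y) z (restrict u x y)
      rw [key x, key y]
  · obtain ⟨Psu, hPsu, rfl⟩ := hu
    obtain ⟨Psv, hPsv, rfl⟩ := hv
    refine ⟨Psu ++ [P] ++ Psv, by simp, ?_, by simp⟩
    intro Q hQ
    simp only [List.mem_append, List.mem_singleton] at hQ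
    rcases hQ with (h | rfl) | h
    · exact hPsu Q h
    · exact hP
    · exact hPsv Q h
end

section
/- Let G be a simple graph on a finite vertex type V. The language consisting of all words w : List V that are permutational 1-11-representations of G is a regular language. -/
section AuxLemmas

variable {V : Type} [Fintype V] [DecidableEq V]

def cap3 (n : ℕ) : Fin 3 := ⟨min n 2, by omega⟩

lemma cap3_succ (c : ℕ) : cap3 ((cap3 c).val + 1) = cap3 (c + 1) := by
  simp only [cap3, Fin.mk.injEq]; omega

lemma cap3_le_one (n : ℕ) : (cap3 n).val ≤ 1 ↔ n ≤ 1 := by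
  simp only [cap3]; omega

def pairStep (x y : V) (st : Option V × Fin 3) (a : V) : Option V × Fin 3 :=
  if a = x ∨ a = y then (some a, if st.1 = some a then cap3 (st.2.val + 1) else st.2)
  else st

def Fcount (x y : V) : Option V → List V → ℕ
  | _, [] => 0
  | l, a :: w =>
    if a = x ∨ a = y then (if l = some a then 1 else 0) + Fcount x y (some a) w
    else Fcount x y l w

def lastR (x y : V) : Option V → List V → Option V
  | l, [] => l
  | l, a :: w => if a = x ∨ a = y then lastR x y (some a) w else lastR x y l w

lemma pair_foldl (x y : V) :
    ∀ (w : List V) (l : Option V) (c : ℕ),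
      w.foldl (pairStep x y) (l, cap3 c) = (lastR x y l w, cap3 (c + Fcount x y l w)) := by
  intro w
  induction w with
  | nil => intro l c; simp [Fcount, lastR]
  | cons a w ih =>
    intro l c
    simp only [List.foldl_cons, pairStep, Fcount, lastR]
    split_ifs with h hl
    · rw [cap3_succ, ih]
      exact Prod.ext rfl (by simp only [cap3, Fin.mk.injEq]; omega)
    · rw [ih]
      exact Prod.ext rfl (by simp only [cap3, Fin.mk.injEq]; omega)
    · exact ih l c

lemma factorXXCount_nil (z : V) : factorXXCount ([] : List V) z = 0 := by
  simp [factorXXCount]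

lemma factorXXCount_cons (a : V) (t : List V) (z : V) :
    factorXXCount (a :: t) z
      = (if a = z ∧ t.head? = some z then 1 else 0) + factorXXCount t z := by
  unfold factorXXCount
  rw [Finset.card_filter, Finset.card_filter, List.length_cons, Finset.sum_range_succ']
  have h0 : ((a :: t)[0]? = some z ∧ (a :: t)[0 + 1]? = some z)
      ↔ (a = z ∧ t.head? = some z) := by
    simp [List.getElem?_cons_succ, ← List.head?_eq_getElem?]
  have h1 : ∀ i : ℕ, ((a :: t)[i + 1]? = some z ∧ (a :: t)[i + 1 + 1]? = some z)
      ↔ (t[i]? = some z ∧ t[i + 1]? = some z) := by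
    intro i
    simp [List.getElem?_cons_succ]
  rw [add_comm]
  congr 1
  · simp only [h0]

lemma restrict_cons (a : V) (w : List V) (x y : V) :
    restrict (a :: w) x y
      = if a = x ∨ a = y then a :: restrict w x y else restrict w x y := by
  simp only [restrict, List.filter_cons]
  by_cases h : a = x ∨ a = y <;> simp [h]

lemma restrict_mem {w : List V} {x y z : V} (hz : z ∈ restrict w x y) : z = x ∨ z = y := by
  simp only [restrict, List.mem_filter, decide_eq_true_eq] at hz
  exact hz.2

lemma Fcount_eq_restrict (x y : V) :
    ∀ (w : List V) (l : Option V), Fcount x y l w = Fcount x y l (restrict w x y) := by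
  intro w
  induction w with
  | nil => intro l; simp [restrict]
  | cons a w ih =>
    intro l
    rw [restrict_cons]
    by_cases h : a = x ∨ a = y
    · simp only [h, if_true, Fcount, ih]
    · simp only [h, if_false, Fcount, ih]

lemma Fcount_some (x y : V) (u : List V) (hu : ∀ z ∈ u, z = x ∨ z = y) (z : V) :
    Fcount x y (some z) u = (if u.head? = some z then 1 else 0) + Fcount x y none u := by
  cases u with
  | nil => simp [Fcount]
  | cons a u' =>
    have ha : a = x ∨ a = y := hu a (List.mem_cons_self (a := a) (l := u'))
    simp only [Fcount, ha, if_true, List.head?_cons]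
    have h1 : ((some z : Option V) = some a) ↔ ((some a : Option V) = some z) := by
      constructor <;> (intro h; exact h.symm)
    have h2 : ¬((none : Option V) = some a) := by simp
    rw [if_neg h2]
    by_cases hz : (some z : Option V) = some a
    · rw [if_pos hz]; simp [hz.symm]
    · rw [if_neg hz]; have hz' : a ≠ z := fun h => hz (by rw [h]); simp [hz']

lemma sum_eq_F (x y : V) (hxy : x ≠ y) :
    ∀ (u : List V), (∀ z ∈ u, z = x ∨ z = y) →
      factorXXCount u x + factorXXCount u y = Fcount x y none u := by
  intro u
  induction u with
  | nil => intro _; simp [factorXXCount_nil, Fcount]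
  | cons a t ih =>
    intro hu
    have ha : a = x ∨ a = y := hu a (List.mem_cons_self (a := a) (l := t))
    have ht : ∀ z ∈ t, z = x ∨ z = y := fun z hz => hu z (List.mem_cons_of_mem a hz)
    rw [factorXXCount_cons, factorXXCount_cons]
    have hF : Fcount x y none (a :: t) = Fcount x y (some a) t := by
      simp [Fcount, ha]
    rw [hF, Fcount_some x y t ht a, ← ih ht]
    have hind : (if a = x ∧ t.head? = some x then 1 else 0)
        + (if a = y ∧ t.head? = some y then 1 else 0)
        = (if t.head? = some a then 1 else 0) := by
      rcases ha with ha | ha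
      · subst ha
        rw [if_neg (show ¬(a = y ∧ t.head? = some y) from fun h => hxy h.1)]
        by_cases hh : t.head? = some a
        · rw [if_pos ⟨rfl, hh⟩, if_pos hh]
        · rw [if_neg (fun h => hh h.2), if_neg hh]
      · subst ha
        rw [if_neg (show ¬(a = x ∧ t.head? = some x) from fun h => hxy h.1.symm)]
        by_cases hh : t.head? = some a
        · rw [if_pos ⟨rfl, hh⟩, if_pos hh]
        · rw [if_neg (fun h => hh h.2), if_neg hh]
    omega



def permStep (st : Option (Finset V)) (a : V) : Option (Finset V) :=
  match st with
  | none => none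
  | some s =>
    if a ∈ s then none
    else if insert a s = Finset.univ then some (∅ : Finset V) else some (insert a s)

lemma permStep_none : ∀ (w : List V), w.foldl permStep none = none := by
  intro w
  induction w with
  | nil => rfl
  | cons a w ih => simpa [permStep] using ih

lemma perm_one : ∀ (t : List V) (s : Finset V), t ≠ [] → t.Nodup →
    (∀ a ∈ t, a ∉ s) → s ∪ t.toFinset = Finset.univ →
    t.foldl permStep (some s) = some ∅ := by
  intro t
  induction t with
  | nil => intro s h; exact absurd rfl h
  | cons a t ih =>
    intro s _ hnd hdis huniv
    have ha : a ∉ s := hdis a (List.mem_cons_self (a := a) (l := t))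
    simp only [List.foldl_cons]
    cases t with
    | nil =>
      have hu : insert a s = Finset.univ := by
        rw [← huniv]
        rw [Finset.insert_eq, Finset.union_comm]; simp
      rw [show permStep (some s) a = some ∅ from by simp [permStep, ha, hu]]
      rfl
    | cons b t' =>
      have hb_ne : b ≠ a := by
        intro h
        exact (List.nodup_cons.mp hnd).1 (h ▸ List.mem_cons_self (a := b) (l := t'))
      have hb_ns : b ∉ s := hdis b (List.mem_cons_of_mem a (List.mem_cons_self (a := b) (l := t')))
      have hne : insert a s ≠ Finset.univ := by
        intro h
        have hb : b ∈ insert a s := h ▸ Finset.mem_univ b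
        rcases Finset.mem_insert.mp hb with h' | h'
        · exact hb_ne h'
        · exact hb_ns h'
      rw [show permStep (some s) a = some (insert a s) from by simp [permStep, ha, hne]]
      apply ih (insert a s) (by simp) (List.nodup_cons.mp hnd).2
      · intro c hc
        intro hmem
        rcases Finset.mem_insert.mp hmem with h' | h'
        · exact (List.nodup_cons.mp hnd).1 (h' ▸ hc)
        · exact hdis c (List.mem_cons_of_mem a hc) h'
      · rw [← huniv]
        ext v
        simp [Finset.mem_insert, List.mem_toFinset]
        tauto

lemma perm_flatten : ∀ (Ps : List (List V)), (∀ P ∈ Ps, IsPermList P) →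
    Ps.flatten.foldl permStep (some (∅ : Finset V)) = some ∅ := by
  intro Ps
  induction Ps with
  | nil => intro _; rfl
  | cons P Ps ih =>
    intro h
    have hP : IsPermList P := h P (List.mem_cons_self (a := P) (l := Ps))
    have hrest := ih (fun Q hQ => h Q (List.mem_cons_of_mem P hQ))
    rw [List.flatten_cons, List.foldl_append]
    rcases isEmpty_or_nonempty V with hV | hV
    · cases P with
      | nil => exact hrest
      | cons a _ => exact (hV.false a).elim
    · have hPfold : P.foldl permStep (some (∅ : Finset V)) = some ∅ := by
        apply perm_one
        · intro h0
          obtain ⟨v⟩ := hV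
          have := hP v
          rw [h0] at this
          simp at this
        · exact List.nodup_iff_count_le_one.mpr (fun a => le_of_eq (hP a))
        · intro a _ hmem
          exact absurd hmem (Finset.notMem_empty a)
        · ext v
          simp [List.mem_toFinset, ← List.count_pos_iff, hP v]
      rw [hPfold]
      exact hrest

lemma perm_split : ∀ (w : List V) (s : Finset V),
    w.foldl permStep (some s) = some ∅ →
    (s = ∅ ∧ w = []) ∨
      ∃ t w', w = t ++ w' ∧ t ≠ [] ∧ t.Nodup ∧ (∀ a ∈ t, a ∉ s) ∧
        s ∪ t.toFinset = Finset.univ ∧ w'.foldl permStep (some (∅ : Finset V)) = some ∅ := by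
  intro w
  induction w with
  | nil =>
    intro s h
    left
    exact ⟨by simpa using (Option.some.injEq _ _ ▸ h : s = ∅), rfl⟩
  | cons a w ih =>
    intro s h
    right
    simp only [List.foldl_cons] at h
    have ha : a ∉ s := by
      intro hmem
      rw [show permStep (some s) a = none from by simp [permStep, hmem]] at h
      rw [permStep_none] at h
      cases h
    by_cases hu : insert a s = Finset.univ
    · rw [show permStep (some s) a = some ∅ from by simp [permStep, ha, hu]] at h
      refine ⟨[a], w, rfl, by simp, List.nodup_singleton a, ?_, ?_, h⟩
      · intro b hb
        rw [List.mem_singleton] at hb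
        exact hb ▸ ha
      · rw [← hu]
        rw [Finset.insert_eq, Finset.union_comm]; simp
    · rw [show permStep (some s) a = some (insert a s) from by simp [permStep, ha, hu]] at h
      rcases ih (insert a s) h with ⟨he, _⟩ | ⟨t, w', hw, htne, hnd, hdis, huniv, hrec⟩
      · exact absurd he (by simp)
      · refine ⟨a :: t, w', by rw [hw, List.cons_append], by simp, ?_, ?_, ?_, hrec⟩
        · rw [List.nodup_cons]
          refine ⟨fun hmem => ?_, hnd⟩
          exact hdis a hmem (Finset.mem_insert_self a s)
        · intro b hb
          rcases List.mem_cons.mp hb with h' | h'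
          · exact h' ▸ ha
          · intro hbs
            exact hdis b h' (Finset.mem_insert_of_mem hbs)
        · rw [← huniv]
          ext v
          simp only [Finset.mem_union, Finset.mem_insert, List.toFinset_cons,
            List.mem_toFinset, List.mem_cons]
          tauto

lemma perm_sound : ∀ (n : ℕ) (w : List V), w.length ≤ n →
    w.foldl permStep (some (∅ : Finset V)) = some ∅ →
    ∃ Ps : List (List V), (∀ P ∈ Ps, IsPermList P) ∧ w = Ps.flatten := by
  intro n
  induction n with
  | zero =>
    intro w hw _
    have : w = [] := List.length_eq_zero_iff.mp (Nat.le_zero.mp hw)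
    exact ⟨[], by simp, by simp [this]⟩
  | succ n ih =>
    intro w hw hfold
    rcases perm_split w ∅ hfold with ⟨_, rfl⟩ | ⟨t, w', rfl, htne, hnd, _, huniv, hrec⟩
    · exact ⟨[], by simp, rfl⟩
    · have hlen : w'.length ≤ n := by
        have h1 : 1 ≤ t.length := List.length_pos_iff.mpr htne
        have := hw
        rw [List.length_append] at this
        omega
      obtain ⟨Ps, h1, h2⟩ := ih w' hlen hrec
      refine ⟨t :: Ps, ?_, by simp [h2]⟩
      intro P hP
      rcases List.mem_cons.mp hP with h' | h'
      · subst h'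
        intro v
        apply List.count_eq_one_of_mem hnd
        rw [← List.mem_toFinset, ← Finset.empty_union (P.toFinset), huniv]
        exact Finset.mem_univ v
      · exact h1 P h'


def foldlInsert (w : List V) (S : Finset V) : Finset V :=
  w.foldl (fun s a => insert a s) S

lemma foldl_insert_eq : ∀ (w : List V) (S : Finset V),
    w.foldl (fun s a => insert a s) S = S ∪ w.toFinset := by
  intro w
  induction w with
  | nil => intro S; simp
  | cons a w ih =>
    intro S
    rw [List.foldl_cons, ih, List.toFinset_cons]
    ext v
    simp only [Finset.mem_union, Finset.mem_insert, List.mem_toFinset]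
    tauto

def repDFA (G : SimpleGraph V) :
    DFA V (Finset V × (V → V → (Option V × Fin 3)) × Option (Finset V)) where
  step := fun st a => (insert a st.1, fun x y => pairStep x y (st.2.1 x y) a, permStep st.2.2 a)
  start := (∅, fun _ _ => (none, cap3 0), some ∅)
  accept := {st | st.1 = Finset.univ ∧
    (∀ x y : V, x ≠ y → (G.Adj x y ↔ (st.2.1 x y).2.val ≤ 1)) ∧ st.2.2 = some ∅}

lemma repDFA_eval (G : SimpleGraph V) : ∀ (w : List V) (S : Finset V)
    (f : V → V → (Option V × Fin 3)) (p : Option (Finset V)),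
    (repDFA G).evalFrom (S, f, p) w =
      (w.foldl (fun s a => insert a s) S,
       fun x y => w.foldl (pairStep x y) (f x y),
       w.foldl permStep p) := by
  intro w
  induction w with
  | nil => intro S f p; rfl
  | cons a w ih =>
    intro S f p
    show (repDFA G).evalFrom ((repDFA G).step (S, f, p) a) w = _
    rw [show (repDFA G).step (S, f, p) a
        = (insert a S, fun x y => pairStep x y (f x y) a, permStep p a) from rfl]
    rw [ih]
    rfl

end AuxLemmas


/-- The language of all permutational 1-11-representations of a given graph `G` is
regular. -/
theorem stmt15 {V : Type} [Fintype V] [DecidableEq V] (G : SimpleGraph V) :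
    Language.IsRegular ({w : List V | IsPerm111Rep G w} : Language V) := by
  refine ⟨_, inferInstance, repDFA G, ?_⟩
  ext w
  rw [DFA.mem_accepts]
  show (repDFA G).evalFrom (∅, fun _ _ => (none, cap3 0), some ∅) w ∈ _ ↔ _
  rw [repDFA_eval]
  have hcov : w.foldl (fun s a => insert a s) (∅ : Finset V) = Finset.univ ↔ ∀ v : V, v ∈ w := by
    rw [foldl_insert_eq, Finset.empty_union, Finset.eq_univ_iff_forall]
    exact forall_congr' fun v => List.mem_toFinset
  have hpair : ∀ x y : V, x ≠ y →
      ((w.foldl (pairStep x y) (none, cap3 0)).2.val ≤ 1 ↔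
        factorXXCount (restrict w x y) x + factorXXCount (restrict w x y) y ≤ 1) := by
    intro x y hxy
    rw [show ((none : Option V), cap3 0) = ((none : Option V), cap3 0) from rfl,
      pair_foldl x y w none 0]
    simp only
    rw [cap3_le_one, Nat.zero_add, Fcount_eq_restrict,
      ← sum_eq_F x y hxy (restrict w x y) (fun z hz => restrict_mem hz)]
  have hperm : w.foldl permStep (some (∅ : Finset V)) = some ∅ ↔
      ∃ Ps : List (List V), (∀ P ∈ Ps, IsPermList P) ∧ w = Ps.flatten := by
    constructor
    · intro h
      exact perm_sound w.length w le_rfl h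
    · rintro ⟨Ps, hPs, rfl⟩
      exact perm_flatten Ps hPs
  constructor
  · rintro ⟨h1, h2, h3⟩
    obtain ⟨Ps, hPs, hflat⟩ := hperm.mp h3
    refine ⟨⟨hcov.mp h1, fun x y hxy => (h2 x y hxy).trans (hpair x y hxy)⟩, ?_⟩
    rcases Ps with _ | ⟨P, Ps'⟩
    · have hwnil : w = [] := by simpa using hflat
      have hempty : IsEmpty V := by
        constructor
        intro v
        have := hcov.mp h1 v
        rw [hwnil] at this
        simp at this
      refine ⟨[[]], by simp, ?_, by simp [hwnil]⟩
      intro P hP v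
      exact (hempty.false v).elim
    · exact ⟨P :: Ps', by simp, hPs, hflat⟩
  · rintro ⟨⟨hcov', hadj⟩, Ps, _, hPs, rfl⟩
    exact ⟨hcov.mpr hcov',
      fun x y hxy => (hadj x y hxy).trans (hpair x y hxy).symm,
      hperm.mpr ⟨Ps, hPs, rfl⟩⟩
end
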